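/- arXiv:1912.04891 — 3 statements merged into one kernel-verified Lean document; each statement's English description precedes it below -/
import Mathlib

section
/- Let X and Y be square-integrable random variables and 𝒢 a sub-σ-algebra such that both E[X | 𝒢] and E[Y | 𝒢] are increasing functions of the underlying i.i.d. weights (in the sense of monotone coordinate functions on a product space with the FKG/Harris property). If E[XY | 𝒢] ≥ E[X | 𝒢]·E[Y | 𝒢] + β·1_𝓔 almost surely for an event 𝓔 ∈ 𝒢 with P(𝓔) ≥ p, then Cov(X,Y) ≥ βp. -/
/-!
Integrating the conditional inequality and using the tower property gives
`E[XY] ≥ E[E[X|𝒢] E[Y|𝒢]] + β P(𝓔)`, while FKG for the increasing functions `E[X|𝒢]`, `E[Y|𝒢]`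
gives `E[E[X|𝒢] E[Y|𝒢]] ≥ E[X] E[Y]`. Subtracting, `Cov(X,Y) ≥ β P(𝓔) ≥ β p`.
-/

open MeasureTheory ProbabilityTheory

/-- The covariance of two real random variables. -/
noncomputable def cov {Ω : Type*} {mΩ : MeasurableSpace Ω} (P : Measure Ω) (f g : Ω → ℝ) : ℝ :=
  (∫ ω, f ω * g ω ∂P) - (∫ ω, f ω ∂P) * (∫ ω, g ω ∂P)

section

variable {Ω : Type*} {m mΩ : MeasurableSpace Ω} {P : Measure Ω} {X Y : Ω → ℝ}

lemma integral_le_of_ae_le_condExp (hm : m ≤ mΩ) [SigmaFinite (P.trim hm)] {f g : Ω → ℝ}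
    (hf : Integrable f P) (hfg : f ≤ᵐ[P] P[g|m]) : ∫ ω, f ω ∂P ≤ ∫ ω, g ω ∂P :=
  (integral_mono_ae hf integrable_condExp hfg).trans_eq (integral_condExp hm)

lemma integrable_condExp_mul_condExp (hX : MemLp X 2 P) (hY : MemLp Y 2 P) :
    Integrable (P[X|m] * P[Y|m]) P :=
  (hX.condExp one_le_two).integrable_mul (hY.condExp one_le_two)

lemma integral_condExp_mul_add_le [IsFiniteMeasure P] (hm : m ≤ mΩ) (hX : MemLp X 2 P)
    (hY : MemLp Y 2 P) (β : ℝ) {E : Set Ω} (hE : MeasurableSet[m] E)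
    (hcond : ∀ᵐ ω ∂P, P[X|m] ω * P[Y|m] ω + β * E.indicator 1 ω ≤ P[X * Y|m] ω) :
    ∫ ω, P[X|m] ω * P[Y|m] ω ∂P + β * P.real E ≤ ∫ ω, X ω * Y ω ∂P := by
  have hind : Integrable (fun ω => β * E.indicator 1 ω) P :=
    ((integrable_const 1).indicator (hm E hE)).const_mul β
  have hprod : Integrable (fun ω => P[X|m] ω * P[Y|m] ω) P :=
    integrable_condExp_mul_condExp hX hY
  have h := integral_le_of_ae_le_condExp hm
    (f := fun ω => P[X|m] ω * P[Y|m] ω + β * E.indicator 1 ω) (g := fun ω => X ω * Y ω)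
    (hprod.add hind) hcond
  rwa [integral_add hprod hind, integral_const_mul, integral_indicator_one (hm E hE)] at h

lemma mul_measureReal_le_cov [IsFiniteMeasure P] (hm : m ≤ mΩ) (hX : MemLp X 2 P)
    (hY : MemLp Y 2 P) (β : ℝ) {E : Set Ω} (hE : MeasurableSet[m] E)
    (hcond : ∀ᵐ ω ∂P, P[X|m] ω * P[Y|m] ω + β * E.indicator 1 ω ≤ P[X * Y|m] ω)
    (hFKG : (∫ ω, X ω ∂P) * (∫ ω, Y ω ∂P) ≤ ∫ ω, P[X|m] ω * P[Y|m] ω ∂P) :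
    β * P.real E ≤ cov P X Y := by
  have := integral_condExp_mul_add_le hm hX hY β hE hcond
  unfold cov
  linarith

end

theorem stmt6_general {Ω : Type} [mΩ : MeasurableSpace Ω] (P : Measure Ω) [IsProbabilityMeasure P]
    (m : MeasurableSpace Ω) (hm : m ≤ mΩ)
    (X Y : Ω → ℝ) (hX : MemLp X 2 P) (hY : MemLp Y 2 P)
    (β p : ℝ) (hβ : 0 < β)
    (E : Set Ω) (hE : MeasurableSet[m] E) (hPE : p ≤ (P E).toReal)
    (hcond : ∀ᵐ ω ∂P,
      (P[X|m]) ω * (P[Y|m]) ω + β * E.indicator (fun _ => (1 : ℝ)) ω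
        ≤ (P[fun ω' => X ω' * Y ω'|m]) ω)
    (hFKG : (∫ ω, X ω ∂P) * (∫ ω, Y ω ∂P) ≤ ∫ ω, (P[X|m]) ω * (P[Y|m]) ω ∂P) :
    β * p ≤ cov P X Y :=
  (mul_le_mul_of_nonneg_left hPE hβ.le).trans (mul_measureReal_le_cov hm hX hY β hE hcond hFKG)

/-- if `E[XY|𝒢] ≥ E[X|𝒢]·E[Y|𝒢] + β·1_𝓔` a.s. with `𝓔 ∈ 𝒢`, `P(𝓔) ≥ p`,
and the conditional expectations `E[X|𝒢]`, `E[Y|𝒢]` are positively correlated (the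
FKG/Harris consequence of their being increasing functions of i.i.d. weights), then
`Cov(X,Y) ≥ βp`. -/
theorem stmt6 {Ω : Type} [mΩ : MeasurableSpace Ω] (P : Measure Ω) [IsProbabilityMeasure P]
    (m : MeasurableSpace Ω) (hm : m ≤ mΩ)
    (X Y : Ω → ℝ) (hX : MemLp X 2 P) (hY : MemLp Y 2 P)
    (hXY : Integrable (fun ω => X ω * Y ω) P)
    (β p : ℝ) (hβ : 0 < β) (hp0 : 0 ≤ p) (hp1 : p ≤ 1)
    (E : Set Ω) (hE : MeasurableSet[m] E) (hPE : p ≤ (P E).toReal)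
    (hcond : ∀ᵐ ω ∂P,
      (P[X|m]) ω * (P[Y|m]) ω + β * E.indicator (fun _ => (1 : ℝ)) ω
        ≤ (P[fun ω' => X ω' * Y ω'|m]) ω)
    (hFKG : (∫ ω, X ω ∂P) * (∫ ω, Y ω ∂P) ≤ ∫ ω, (P[X|m]) ω * (P[Y|m]) ω ∂P) :
    β * p ≤ cov P X Y :=
  stmt6_general (mΩ := mΩ) P m hm X Y hX hY β p hβ E hE hPE hcond hFKG
end

section
/- Let T be a nonnegative superadditive passage-time functional in exponential LPP, and suppose T^R_{0,r} (the passage time from 0 to (r,r) constrained to a thin rectangle R) is stochastically larger than the sum of k i.i.d. copies of T^R_{0, r/k}. If for each fixed k, liminf_{r→∞} P(T^R_{0, r/k} ≥ 4r/k + (r/k)^{1/3}) ≥ β > 0 for some β independent of k, then P(T^R_{0,r} ≥ 4r + k^{2/3} r^{1/3}) ≥ β^k for all large r; in particular, for every x > 0 there exist C, c > 0 such that P(T^R_{0,r} > 4r + x r^{1/3}) ≥ C e^{−c x^{3/2}} for all large r. -/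
/-!
Choosing `s = 4r/k + (r/k)^{1/3}` in the domination `P(Z (r/k) ≥ s)^k ≤ P(Z r ≥ k s)` turns the
one-block lower bound `β` into `β^k` for the threshold `k s = 4r + k^{2/3} r^{1/3}`, by KPZ
scaling. Taking `k = ⌊x^{3/2}⌋ + 1` makes `k^{2/3} > x` and `β^k ≥ β e^{-c x^{3/2}}` with
`c = 1 - log β`, which is the stretched-exponential lower bound.
-/

open MeasureTheory ProbabilityTheory

lemma mul_div_add_div_rpow_one_third {k : ℝ} (hk : 0 < k) {r : ℝ} (hr : 0 ≤ r) (a : ℝ) :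
    k * (a * r / k + (r / k) ^ ((1 : ℝ) / 3)) = a * r + k ^ ((2 : ℝ) / 3) * r ^ ((1 : ℝ) / 3) := by
  have hk_rpow : k ^ ((2 : ℝ) / 3) * k ^ ((1 : ℝ) / 3) = k := by
    rw [← Real.rpow_add hk]; norm_num
  have hk_third : k ^ ((1 : ℝ) / 3) ≠ 0 := (Real.rpow_pos_of_pos hk _).ne'
  rw [Real.div_rpow hr hk.le, mul_add, mul_div_cancel₀ _ hk.ne']
  congr 1
  field_simp
  linear_combination -r ^ ((1 : ℝ) / 3) * hk_rpow

lemma lt_natCast_floor_rpow_three_halves_add_one_rpow {x : ℝ} (hx : 0 ≤ x) :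
    x < ((⌊x ^ ((3 : ℝ) / 2)⌋₊ + 1 : ℕ) : ℝ) ^ ((2 : ℝ) / 3) := by
  have ht : 0 ≤ x ^ ((3 : ℝ) / 2) := Real.rpow_nonneg hx _
  calc x = (x ^ ((3 : ℝ) / 2)) ^ ((2 : ℝ) / 3) := by rw [← Real.rpow_mul hx]; norm_num
    _ < _ := by
      gcongr
      push_cast
      exact Nat.lt_floor_add_one _

lemma mul_exp_le_pow_floor_add_one {β : ℝ} (hβ : 0 < β) (hβ1 : β ≤ 1) {t : ℝ} (ht : 0 ≤ t) :
    β * Real.exp (-(1 - Real.log β) * t) ≤ β ^ (⌊t⌋₊ + 1) := by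
  have hexp : Real.exp (-(1 - Real.log β) * t) ≤ β ^ t := by
    rw [Real.rpow_def_of_pos hβ]
    gcongr
    nlinarith
  have hfloor : β ^ t ≤ β ^ ⌊t⌋₊ := by
    rw [← Real.rpow_natCast]
    exact Real.rpow_le_rpow_of_exponent_ge hβ hβ1 (Nat.floor_le ht)
  rw [pow_succ']
  gcongr
  exact hexp.trans hfloor

section TailBounds

variable {Ω : Type*} [MeasurableSpace Ω] (P : Measure Ω) (Z : ℝ → Ω → ℝ) {β : ℝ}

lemma eventually_ofReal_pow_le_measure_of_tail_pow_le (hβ : 0 < β)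
    (hdom : ∀ k : ℕ, 1 ≤ k → ∀ r : ℝ, 0 < r → ∀ s : ℝ,
      (P {ω | s ≤ Z (r / k) ω}) ^ k ≤ P {ω | (k : ℝ) * s ≤ Z r ω})
    (hβk : ∀ k : ℕ, 1 ≤ k → ∃ r₀ : ℝ, ∀ r : ℝ, r₀ ≤ r →
      ENNReal.ofReal β ≤ P {ω | 4 * r / k + (r / k) ^ ((1 : ℝ) / 3) ≤ Z (r / k) ω})
    (k : ℕ) (hk : 1 ≤ k) :
    ∃ r₀ : ℝ, ∀ r : ℝ, r₀ ≤ r →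
      ENNReal.ofReal (β ^ k)
        ≤ P {ω | 4 * r + (k : ℝ) ^ ((2 : ℝ) / 3) * r ^ ((1 : ℝ) / 3) ≤ Z r ω} := by
  obtain ⟨r₀, hr₀⟩ := hβk k hk
  refine ⟨max r₀ 1, fun r hr => ?_⟩
  have hr_pos : 0 < r := one_pos.trans_le ((le_max_right _ _).trans hr)
  have hk_pos : (0 : ℝ) < k := by exact_mod_cast hk
  calc ENNReal.ofReal (β ^ k) = ENNReal.ofReal β ^ k := ENNReal.ofReal_pow hβ.le k
    _ ≤ P {ω | 4 * r / k + (r / k) ^ ((1 : ℝ) / 3) ≤ Z (r / k) ω} ^ k :=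
        pow_le_pow_left' (hr₀ r ((le_max_left _ _).trans hr)) k
    _ ≤ P {ω | (k : ℝ) * (4 * r / k + (r / k) ^ ((1 : ℝ) / 3)) ≤ Z r ω} := hdom k hk r hr_pos _
    _ = _ := by rw [mul_div_add_div_rpow_one_third hk_pos hr_pos.le]

lemma exists_stretched_exp_lower_bound_of_pow (hβ : 0 < β) (hβ1 : β ≤ 1)
    (hpow : ∀ k : ℕ, 1 ≤ k → ∃ r₀ : ℝ, ∀ r : ℝ, r₀ ≤ r →
      ENNReal.ofReal (β ^ k)
        ≤ P {ω | 4 * r + (k : ℝ) ^ ((2 : ℝ) / 3) * r ^ ((1 : ℝ) / 3) ≤ Z r ω})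
    {x : ℝ} (hx : 0 < x) :
    ∃ C > (0 : ℝ), ∃ c > (0 : ℝ), ∃ r₀ : ℝ, ∀ r : ℝ, r₀ ≤ r →
      ENNReal.ofReal (C * Real.exp (-c * x ^ ((3 : ℝ) / 2)))
        ≤ P {ω | 4 * r + x * r ^ ((1 : ℝ) / 3) < Z r ω} := by
  set k := ⌊x ^ ((3 : ℝ) / 2)⌋₊ + 1
  obtain ⟨r₀, hr₀⟩ := hpow k (Nat.le_add_left 1 _)
  have hc : 0 < 1 - Real.log β := by linarith [Real.log_nonpos hβ.le hβ1]
  refine ⟨β, hβ, 1 - Real.log β, hc, max r₀ 1, fun r hr => ?_⟩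
  have hr_pos : 0 < r := one_pos.trans_le ((le_max_right _ _).trans hr)
  have hx_lt : x < (k : ℝ) ^ ((2 : ℝ) / 3) := lt_natCast_floor_rpow_three_halves_add_one_rpow hx.le
  have hsub : {ω | 4 * r + (k : ℝ) ^ ((2 : ℝ) / 3) * r ^ ((1 : ℝ) / 3) ≤ Z r ω}
      ⊆ {ω | 4 * r + x * r ^ ((1 : ℝ) / 3) < Z r ω} := fun ω (hω : _ ≤ Z r ω) => by
    have := mul_lt_mul_of_pos_right hx_lt (Real.rpow_pos_of_pos hr_pos ((1 : ℝ) / 3))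
    exact show _ < Z r ω by linarith
  calc ENNReal.ofReal (β * Real.exp (-(1 - Real.log β) * x ^ ((3 : ℝ) / 2)))
      ≤ ENNReal.ofReal (β ^ k) :=
        ENNReal.ofReal_le_ofReal
          (mul_exp_le_pow_floor_add_one hβ hβ1 (Real.rpow_nonneg hx.le _))
    _ ≤ _ := hr₀ r ((le_max_left _ _).trans hr)
    _ ≤ _ := measure_mono hsub

end TailBounds

/-- if the constrained passage time `Z r = T^R_{0,r}` stochastically
dominates sums of `k` i.i.d. copies of `Z (r/k)` (encoded by the resulting tail
inequality `P(Z r ≥ k s) ≥ P(Z (r/k) ≥ s)^k`), and for each `k` the probability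
`P(Z (r/k) ≥ 4r/k + (r/k)^{1/3}) ≥ β > 0` for all large `r`, then
`P(Z r ≥ 4r + k^{2/3} r^{1/3}) ≥ β^k` for all large `r`; in particular for every `x > 0`
there are `C, c > 0` with `P(Z r > 4r + x r^{1/3}) ≥ C e^{−c x^{3/2}}` for all large `r`. -/
theorem stmt11 {Ω : Type} [MeasurableSpace Ω] (P : Measure Ω) [IsProbabilityMeasure P]
    (Z : ℝ → Ω → ℝ) (β : ℝ) (hβ : 0 < β)
    (hdom : ∀ k : ℕ, 1 ≤ k → ∀ r : ℝ, 0 < r → ∀ s : ℝ,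
      (P {ω | s ≤ Z (r / k) ω}) ^ k ≤ P {ω | (k : ℝ) * s ≤ Z r ω})
    (hβk : ∀ k : ℕ, 1 ≤ k → ∃ r₀ : ℝ, ∀ r : ℝ, r₀ ≤ r →
      ENNReal.ofReal β ≤ P {ω | 4 * r / k + (r / k) ^ ((1 : ℝ) / 3) ≤ Z (r / k) ω}) :
    (∀ k : ℕ, 1 ≤ k → ∃ r₀ : ℝ, ∀ r : ℝ, r₀ ≤ r →
      ENNReal.ofReal (β ^ k)
        ≤ P {ω | 4 * r + (k : ℝ) ^ ((2 : ℝ) / 3) * r ^ ((1 : ℝ) / 3) ≤ Z r ω}) ∧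
    (∀ x : ℝ, 0 < x → ∃ C > (0 : ℝ), ∃ c > (0 : ℝ), ∃ r₀ : ℝ, ∀ r : ℝ, r₀ ≤ r →
      ENNReal.ofReal (C * Real.exp (-c * x ^ ((3 : ℝ) / 2)))
        ≤ P {ω | 4 * r + x * r ^ ((1 : ℝ) / 3) < Z r ω}) := by
  have hpow := eventually_ofReal_pow_le_measure_of_tail_pow_le P Z hβ hdom hβk
  have hβ1 : β ≤ 1 := by
    obtain ⟨r₀, hr₀⟩ := hβk 1 le_rfl
    exact ENNReal.ofReal_le_one.mp ((hr₀ r₀ le_rfl).trans prob_le_one)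
  exact ⟨hpow, fun x hx => exists_stretched_exp_lower_bound_of_pow P Z hβ hβ1 hpow hx⟩
end

section
/- Let (X_n)_{n≥1} be continuous random functions on ℝ converging weakly (uniformly on compacts) to a continuous process X, and suppose a family of events A_{ι,ε,I} (indexed by intervals I and parameters ι < ε) concerning the maximum of the function over I versus over a bigger interval satisfies P(X ∈ A_{ι,ε,I}) ≤ g(ε) for all admissible (ι, ε, I), for a fixed function g. If each A_{ι,ε,I} is a closed set in the uniform-on-compacts topology, then for every ι, ε there is n₀ such that for n ≥ n₀ and all admissible I, P(X_n ∈ A_{ι,ε,I}) ≤ 9 g(9ε); i.e., maximum-location estimates for the limit transfer to the prelimit with uniformly bounded loss, via a finite net of intervals and the Portmanteau theorem. -/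
open MeasureTheory

noncomputable instance : MeasurableSpace C(ℝ, ℝ) := borel _
instance : BorelSpace C(ℝ, ℝ) := ⟨rfl⟩

/-- transfer of maximum-location estimates from a weak limit to the
prelimit. Let `μ_n → ν` weakly on `C(ℝ,ℝ)` (compact-open = uniform-on-compacts
topology), and let `A ε a b` be closed events (monotone in the interval `[a,b]` and in
`ε`) with `ν(A ε a b) ≤ g(ε)` for all admissible intervals `[a,b] ⊆ [-M,M]` of length
`≤ ε`. Then for every `0 < ι < ε` there is `n₀` such that for all `n ≥ n₀` and all
admissible `I = [a,b]` with `ι ≤ b − a ≤ ε`, `μ_n(A ε a b) ≤ 9 g(9ε)`. -/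
theorem stmt19 (M : ℝ) (hM : 0 < M)
    (μ : ℕ → ProbabilityMeasure C(ℝ, ℝ)) (ν : ProbabilityMeasure C(ℝ, ℝ))
    (hconv : Filter.Tendsto μ Filter.atTop (nhds ν))
    (A : ℝ → ℝ → ℝ → Set C(ℝ, ℝ)) (g : ℝ → ℝ) (hg : ∀ ε : ℝ, 0 < ε → 0 < g ε)
    (hclosed : ∀ ε a b : ℝ, IsClosed (A ε a b))
    (hmono : ∀ ε ε' a a' b b' : ℝ, ε ≤ ε' → a' ≤ a → b ≤ b' → A ε a b ⊆ A ε' a' b')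
    (hlim : ∀ ε a b : ℝ, -M ≤ a → a ≤ b → b ≤ M → b - a ≤ ε →
      (ν : Measure C(ℝ, ℝ)) (A ε a b) ≤ ENNReal.ofReal (g ε)) :
    ∀ ι ε : ℝ, 0 < ι → ι < ε → ∃ n₀ : ℕ, ∀ n : ℕ, n₀ ≤ n → ∀ a b : ℝ,
      -M ≤ a → b ≤ M → ι ≤ b - a → b - a ≤ ε →
      (μ n : Measure C(ℝ, ℝ)) (A ε a b) ≤ ENNReal.ofReal (9 * g (9 * ε)) := by
  intro ι ε hι hιε
  have hε : 0 < ε := hι.trans hιε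
  have hg9 : 0 < g (9 * ε) := hg _ (by linarith)
  set N : ℕ := ⌊2 * M / ε⌋₊ with hN
  set a' : ℕ → ℝ := fun k => -M + k * ε with ha'
  set b' : ℕ → ℝ := fun k => min (a' k + 3 * ε) M with hb'
  set c : ENNReal := ENNReal.ofReal (9 * g (9 * ε)) with hc
  have hνB : ∀ k : ℕ, k ≤ N →
      (ν : Measure C(ℝ, ℝ)) (A (9 * ε) (a' k) (b' k)) ≤ ENNReal.ofReal (g (9 * ε)) := by
    intro k hk
    have hkε : (k : ℝ) * ε ≤ 2 * M := by
      have h1 : (k : ℝ) ≤ 2 * M / ε := le_trans (Nat.cast_le.mpr hk)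
        (Nat.floor_le (by positivity))
      calc (k : ℝ) * ε ≤ (2 * M / ε) * ε := by nlinarith
        _ = 2 * M := by field_simp
    refine hlim _ _ _ (by simp [ha']; positivity) ?_ (min_le_right _ _) ?_
    · exact le_min (by linarith) (by simp only [ha']; linarith)
    · have := min_le_left (a' k + 3 * ε) M
      linarith
  have hlt : ∀ᶠ n in Filter.atTop, ∀ k ∈ Finset.range (N + 1),
      (μ n : Measure C(ℝ, ℝ)) (A (9 * ε) (a' k) (b' k)) < c := by
    rw [Filter.eventually_all_finset]
    intro k hk
    have hlimsup := ProbabilityMeasure.limsup_measure_closed_le_of_tendsto hconv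
      (hclosed (9 * ε) (a' k) (b' k))
    refine Filter.eventually_lt_of_limsup_lt (lt_of_le_of_lt hlimsup ?_)
    refine lt_of_le_of_lt (hνB k (Nat.lt_succ_iff.mp (Finset.mem_range.mp hk))) ?_
    exact ENNReal.ofReal_lt_ofReal_iff (by positivity) |>.mpr (by linarith)
  obtain ⟨n₀, hn₀⟩ := Filter.eventually_atTop.mp hlt
  refine ⟨n₀, fun n hn a b ha hb hab1 hab2 => ?_⟩
  set k : ℕ := ⌊(a + M) / ε⌋₊ with hk
  have haM : 0 ≤ (a + M) / ε := div_nonneg (by linarith) hε.le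
  have hkN : k ≤ N := Nat.floor_mono (by gcongr; linarith)
  have hka : a' k ≤ a := by
    have h1 : (k : ℝ) ≤ (a + M) / ε := Nat.floor_le haM
    have : (k : ℝ) * ε ≤ a + M := by
      calc (k : ℝ) * ε ≤ ((a + M) / ε) * ε := by nlinarith
        _ = a + M := by field_simp
    simp only [ha']; linarith
  have hkb : b ≤ b' k := by
    have h1 : (a + M) / ε < k + 1 := Nat.lt_floor_add_one _
    have h2 : a + M < ((k : ℝ) + 1) * ε := by
      have := (div_lt_iff₀ hε).mp h1
      linarith
    refine le_min ?_ hb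
    simp only [ha']; nlinarith
  have hsub : A ε a b ⊆ A (9 * ε) (a' k) (b' k) :=
    hmono _ _ _ _ _ _ (by linarith) hka hkb
  calc (μ n : Measure C(ℝ, ℝ)) (A ε a b)
      ≤ (μ n : Measure C(ℝ, ℝ)) (A (9 * ε) (a' k) (b' k)) := measure_mono hsub
    _ ≤ c := le_of_lt (hn₀ n hn k (Finset.mem_range.mpr (Nat.lt_succ_of_le hkN)))
end
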